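/- arXiv:1302.0213 — 3 statements merged into one kernel-verified Lean document; each statement's English description precedes it below -/
import Mathlib

section
/- Let G and H be groups and assume G is isoclinic to H. If G has abelian centralizers, then H has abelian centralizers. -/
/-! Both being central and commuting are detected on central quotients and commutators:
`g ∈ Z(G)` iff `gZ(G) = 1`, and `g₁, g₂` commute iff `[g₁, g₂] = 1`. An isoclinism therefore
matches central elements with central elements and commuting pairs with commuting pairs, and the
abelian-centralizer condition is phrased entirely in these terms. -/

open scoped commutatorElement

theorem mem_commutator_of {G : Type} [Group G] (g₁ g₂ : G) : ⁅g₁, g₂⁆ ∈ commutator G := by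
  rw [commutator_def]
  exact Subgroup.commutator_mem_commutator (Subgroup.mem_top _) (Subgroup.mem_top _)

/-- Two groups are isoclinic. -/
def IsIsoclinic (G H : Type) [Group G] [Group H] : Prop :=
  ∃ (ζ : (G ⧸ Subgroup.center G) ≃* (H ⧸ Subgroup.center H))
    (η : (commutator G) ≃* (commutator H)),
    ∀ (g₁ g₂ : G) (h₁ h₂ : H),
      ζ ((g₁ : G) : G ⧸ Subgroup.center G) = ((h₁ : H) : H ⧸ Subgroup.center H) →
      ζ ((g₂ : G) : G ⧸ Subgroup.center G) = ((h₂ : H) : H ⧸ Subgroup.center H) →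
      η ⟨⁅g₁, g₂⁆, mem_commutator_of g₁ g₂⟩ = ⟨⁅h₁, h₂⁆, mem_commutator_of h₁ h₂⟩

/-- A group has abelian centralizers if the centralizer of every non-central element
is abelian. -/
def HasAbelianCentralizers (G : Type) [Group G] : Prop :=
  ∀ x : G, x ∉ Subgroup.center G →
    ∀ a ∈ Subgroup.centralizer {x}, ∀ b ∈ Subgroup.centralizer {x}, a * b = b * a

theorem hasAbelianCentralizers_iff {G : Type} [Group G] :
    HasAbelianCentralizers G ↔ ∀ x : G, x ∉ Subgroup.center G →
      ∀ a, Commute a x → ∀ b, Commute b x → Commute a b := by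
  simp only [HasAbelianCentralizers, Subgroup.mem_centralizer_singleton_iff]
  rfl

section Isoclinism

variable {G H : Type} [Group G] [Group H]

def IsIsoclinism (ζ : (G ⧸ Subgroup.center G) ≃* (H ⧸ Subgroup.center H))
    (η : commutator G ≃* commutator H) : Prop :=
  ∀ (g₁ g₂ : G) (h₁ h₂ : H),
    ζ (g₁ : G ⧸ Subgroup.center G) = (h₁ : H ⧸ Subgroup.center H) →
    ζ (g₂ : G ⧸ Subgroup.center G) = (h₂ : H ⧸ Subgroup.center H) →
    η ⟨⁅g₁, g₂⁆, mem_commutator_of g₁ g₂⟩ = ⟨⁅h₁, h₂⁆, mem_commutator_of h₁ h₂⟩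

theorem isIsoclinic_iff_exists_isIsoclinism :
    IsIsoclinic G H ↔ ∃ ζ η, IsIsoclinism (G := G) (H := H) ζ η :=
  Iff.rfl

theorem exists_mk_eq_of_mulEquiv {N : Subgroup G} {M : Subgroup H} [N.Normal] [M.Normal]
    (ζ : G ⧸ N ≃* H ⧸ M) (h : H) : ∃ g : G, ζ (g : G ⧸ N) = (h : H ⧸ M) := by
  obtain ⟨q, hq⟩ := ζ.surjective (h : H ⧸ M)
  obtain ⟨g, rfl⟩ := QuotientGroup.mk_surjective q
  exact ⟨g, hq⟩

theorem mem_iff_of_mulEquiv {N : Subgroup G} {M : Subgroup H} [N.Normal] [M.Normal]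
    (ζ : G ⧸ N ≃* H ⧸ M) {g : G} {h : H} (hgh : ζ (g : G ⧸ N) = (h : H ⧸ M)) :
    g ∈ N ↔ h ∈ M := by
  rw [← QuotientGroup.eq_one_iff, ← QuotientGroup.eq_one_iff, ← hgh, map_eq_one_iff ζ ζ.injective]

theorem IsIsoclinism.commute_iff {ζ : (G ⧸ Subgroup.center G) ≃* (H ⧸ Subgroup.center H)}
    {η : commutator G ≃* commutator H} (hζη : IsIsoclinism ζ η) {g₁ g₂ : G} {h₁ h₂ : H}
    (h₁_eq : ζ (g₁ : G ⧸ Subgroup.center G) = (h₁ : H ⧸ Subgroup.center H))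
    (h₂_eq : ζ (g₂ : G ⧸ Subgroup.center G) = (h₂ : H ⧸ Subgroup.center H)) :
    Commute g₁ g₂ ↔ Commute h₁ h₂ := by
  have hη := hζη g₁ g₂ h₁ h₂ h₁_eq h₂_eq
  rw [← commutatorElement_eq_one_iff_commute, ← commutatorElement_eq_one_iff_commute,
    ← Subgroup.mk_eq_one (h := mem_commutator_of g₁ g₂),
    ← Subgroup.mk_eq_one (h := mem_commutator_of h₁ h₂), ← hη, map_eq_one_iff η η.injective]

end Isoclinism

theorem stmt2 (G H : Type) [Group G] [Group H] (hGH : IsIsoclinic G H)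
    (hG : HasAbelianCentralizers G) : HasAbelianCentralizers H := by
  obtain ⟨ζ, η, hζη⟩ := isIsoclinic_iff_exists_isIsoclinism.mp hGH
  rw [hasAbelianCentralizers_iff] at hG ⊢
  intro x hx a hax b hbx
  obtain ⟨gx, hgx⟩ := exists_mk_eq_of_mulEquiv ζ x
  obtain ⟨ga, hga⟩ := exists_mk_eq_of_mulEquiv ζ a
  obtain ⟨gb, hgb⟩ := exists_mk_eq_of_mulEquiv ζ b
  have hgx_center : gx ∉ Subgroup.center G := (mem_iff_of_mulEquiv ζ hgx).not.mpr hx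
  have hgab : Commute ga gb := hG gx hgx_center
    ga ((hζη.commute_iff hga hgx).mpr hax) gb ((hζη.commute_iff hgb hgx).mpr hbx)
  exact (hζη.commute_iff hga hgb).mp hgab
end

section
/- Let n ≥ 2, let 𝕂 be a field, and let G be a quotient of Γₙ, i.e. there exists a surjective group homomorphism Γₙ → G. Then every finite-dimensional absolutely simple 𝕂G-module has dimension at most two. -/
open scoped TensorProduct

/-- The defining relations of the group
`Γₙ = ⟨g, h, ε ∣ hg = εgh, gε = ε⁻¹g, hε = εh, εⁿ = 1⟩`,
with generators `0 ↦ g`, `1 ↦ h`, `2 ↦ ε`. -/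
def GammaRels (n : ℕ) : Set (FreeGroup (Fin 3)) :=
  { FreeGroup.of 1 * FreeGroup.of 0 * (FreeGroup.of 2 * FreeGroup.of 0 * FreeGroup.of 1)⁻¹,
    FreeGroup.of 0 * FreeGroup.of 2 * ((FreeGroup.of 2)⁻¹ * FreeGroup.of 0)⁻¹,
    FreeGroup.of 1 * FreeGroup.of 2 * (FreeGroup.of 2 * FreeGroup.of 1)⁻¹,
    (FreeGroup.of 2) ^ n }

/-- The group `Γₙ = ⟨g, h, ε ∣ hg = εgh, gε = ε⁻¹g, hε = εh, εⁿ = 1⟩`. -/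
def Gamma (n : ℕ) : Type := PresentedGroup (GammaRels n)

instance (n : ℕ) : Group (Gamma n) := inferInstanceAs (Group (PresentedGroup (GammaRels n)))

/-- The base change of a representation along a field extension `K ⊆ L`. -/
noncomputable def repBaseChange {K : Type} [Field K] (L : Type) [Field L] [Algebra K L]
    {G : Type} [Group G] {V : Type} [AddCommGroup V] [Module K V]
    (ρ : Representation K G V) : Representation L G (L ⊗[K] V) where
  toFun g := LinearMap.baseChange L (ρ g)
  map_one' := by
    ext v
    simp
  map_mul' g h := by
    ext v
    simp

/-- A finite-dimensional representation is absolutely simple if all its base changes to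
field extensions of `K` are simple. -/
def IsAbsolutelySimpleRep (K : Type) [Field K] (G : Type) [Group G]
    {V : Type} [AddCommGroup V] [Module K V] (ρ : Representation K G V) : Prop :=
  ∀ (L : Type) [Field L] [Algebra K L],
    IsSimpleModule (MonoidAlgebra L G) (repBaseChange L ρ).asModule

/-! Pass to an algebraic closure, where the base change is irreducible. In `Γₙ` the square `g²`
is central, so by Schur's lemma it acts as a scalar, and the commuting operators `h`, `ε` have a
common eigenvector `v`. Since `εg = gε⁻¹` and `hg = εgh`, the vector `gv` is again a common
eigenvector of `h` and `ε`, so `span {v, gv}` is a nonzero subrepresentation, hence the whole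
space. -/

open Module

namespace Gamma

variable (n : ℕ)

def g : Gamma n := PresentedGroup.of 0

def h : Gamma n := PresentedGroup.of 1

def ε : Gamma n := PresentedGroup.of 2

lemma h_mul_g : h n * g n = ε n * g n * h n :=
  PresentedGroup.mk_eq_mk_of_mul_inv_mem (by simp [GammaRels])

lemma g_mul_ε : g n * ε n = (ε n)⁻¹ * g n :=
  PresentedGroup.mk_eq_mk_of_mul_inv_mem (by simp [GammaRels])

lemma h_mul_ε : h n * ε n = ε n * h n :=
  PresentedGroup.mk_eq_mk_of_mul_inv_mem (by simp [GammaRels])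

lemma closure_g_h_ε : Subgroup.closure {g n, h n, ε n} = ⊤ := by
  refine eq_top_iff.2 ((PresentedGroup.closure_range_of (GammaRels n)).symm.le.trans
    (Subgroup.closure_mono ?_))
  rintro _ ⟨i, rfl⟩
  fin_cases i
  exacts [Or.inl rfl, Or.inr (Or.inl rfl), Or.inr (Or.inr rfl)]

end Gamma

section Relations

variable {G : Type*} [Group G] {g h ε : G}

lemma mul_mul_eq_of_mul_eq_inv_mul (hgε : g * ε = ε⁻¹ * g) : ε * g * ε = g := by
  rw [mul_assoc, hgε, mul_inv_cancel_left]

lemma mul_self_mem_center_of_relations (hgen : Subgroup.closure {g, h, ε} = ⊤)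
    (hhg : h * g = ε * g * h) (hgε : g * ε = ε⁻¹ * g) : g * g ∈ Subgroup.center G := by
  have hεgε := mul_mul_eq_of_mul_eq_inv_mul hgε
  simp only [Subgroup.center_eq_iInf hgen, Subgroup.mem_iInf, Set.mem_insert_iff,
    Set.mem_singleton_iff, forall_eq_or_imp, forall_eq, Subgroup.mem_centralizer_singleton_iff]
  refine ⟨by group, ?_, ?_⟩
  · calc g * g * h = ε * g * ε * g * h := by nth_rewrite 1 [← hεgε]; rfl
      _ = ε * g * (ε * g * h) := by group
      _ = h * (g * g) := by rw [← hhg, ← mul_assoc, ← hhg, mul_assoc]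
  · calc g * g * ε = ε * g * ε * g * ε := by nth_rewrite 1 [← hεgε]; rfl
      _ = ε * g * (ε * g * ε) := by group
      _ = ε * (g * g) := by rw [hεgε, mul_assoc]

end Relations

namespace Module.End

variable {K V : Type*} [Field K] [IsAlgClosed K] [AddCommGroup V] [Module K V]
  [FiniteDimensional K V] [Nontrivial V]

lemma exists_common_eigenvector {f g : End K V} (hfg : Commute f g) :
    ∃ v ≠ 0, ∃ a b : K, f v = a • v ∧ g v = b • v := by
  obtain ⟨a, ha⟩ := exists_eigenvalue f
  have hmaps : Set.MapsTo g (f.eigenspace a) (f.eigenspace a) :=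
    mapsTo_genEigenspace_of_comm hfg a 1
  have : Nontrivial (f.eigenspace a) := Submodule.nontrivial_iff_ne_bot.mpr ha
  obtain ⟨b, hb⟩ := exists_eigenvalue (g.restrict hmaps)
  obtain ⟨⟨v, hva⟩, hvb, hv0⟩ := hb.exists_hasEigenvector
  refine ⟨v, by simpa using hv0, a, b, mem_eigenspace_iff.mp hva, ?_⟩
  exact congrArg Subtype.val (mem_eigenspace_iff.mp hvb)

end Module.End

namespace Representation

variable {k G V : Type*} [Field k] [Group G] [AddCommGroup V] [Module k V]
  (σ : Representation k G V)

lemma inv_apply_eq_inv_smul {x : G} {v : V} {c : k} (h : σ x v = c • v) :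
    σ x⁻¹ v = c⁻¹ • v := by
  rcases eq_or_ne c 0 with rfl | hc
  · have hv : v = 0 := by simpa [h] using (σ.inv_self_apply x v).symm
    simp [hv]
  · rw [← σ.inv_self_apply x (c⁻¹ • v), map_smul, h, smul_smul, inv_mul_cancel₀ hc, one_smul]

lemma map_eq_of_mem_invtSubmodule [FiniteDimensional k V] {p : Submodule k V} {x : G}
    (hp : p ∈ End.invtSubmodule (σ x)) : p.map (σ x) = p :=
  Submodule.eq_of_le_of_finrank_eq ((End.mem_invtSubmodule_iff_map_le _).mp hp) <|
    (Submodule.equivMapOfInjective _ (σ.apply_bijective x).injective p).finrank_eq.symm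

lemma mem_invtSubmodule_of_closure_eq_top [FiniteDimensional k V] {S : Set G}
    (hS : Subgroup.closure S = ⊤) {p : Submodule k V}
    (hp : ∀ s ∈ S, p ∈ End.invtSubmodule (σ s)) : p ∈ σ.invtSubmodule := by
  -- Unlike `p ≤ p.comap (σ x)`, the condition `p.map (σ x) = p` is stable under inverses.
  let stabilizer : Subgroup G :=
    { carrier := {x | p.map (σ x) = p}
      one_mem' := by simp [End.one_eq_id]
      mul_mem' := fun {x y} (hx : p.map (σ x) = p) (hy : p.map (σ y) = p) => by
        change p.map (σ (x * y)) = p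
        rw [map_mul, End.mul_eq_comp, Submodule.map_comp, hy, hx]
      inv_mem' := fun {x} (hx : p.map (σ x) = p) => by
        change p.map (σ x⁻¹) = p
        nth_rewrite 1 [← hx]
        rw [← Submodule.map_comp, ← End.mul_eq_comp, ← map_mul, inv_mul_cancel, map_one,
          End.one_eq_id, Submodule.map_id] }
  have hstab : stabilizer = ⊤ := top_le_iff.mp <| hS ▸
    (Subgroup.closure_le stabilizer).mpr fun s hs => σ.map_eq_of_mem_invtSubmodule (hp s hs)
  refine σ.mem_invtSubmodule.mpr fun x => (End.mem_invtSubmodule_iff_map_le _).mpr ?_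
  exact (show x ∈ stabilizer from hstab ▸ Subgroup.mem_top x).le

lemma IsIrreducible.eq_bot_or_eq_top_of_mem_invtSubmodule [σ.IsIrreducible] {p : Submodule k V}
    (hp : p ∈ σ.invtSubmodule) : p = ⊥ ∨ p = ⊤ :=
  (eq_bot_or_eq_top (⟨p, fun g _ hv => σ.mem_invtSubmodule.mp hp g hv⟩ : Subrepresentation σ)).imp
    (congrArg Subrepresentation.toSubmodule) (congrArg Subrepresentation.toSubmodule)

lemma IsIrreducible.exists_eq_smul_one_of_commute [IsAlgClosed k] [FiniteDimensional k V]
    [σ.IsIrreducible] {T : End k V} (hT : ∀ x, Commute (σ x) T) : ∃ μ : k, T = μ • 1 := by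
  obtain ⟨μ, hμ⟩ := IsIrreducible.algebraMap_intertwiningMap_bijective_of_isAlgClosed.2
    ⟨T, fun x => (hT x).eq.symm⟩
  exact ⟨μ, LinearMap.ext fun v => (congrArg (· v) hμ).symm⟩

lemma IsIrreducible.finrank_le_card_of_span_mem_invtSubmodule [σ.IsIrreducible] (s : Finset V)
    (hs : Submodule.span k (s : Set V) ∈ σ.invtSubmodule) {v : V} (hvs : v ∈ s) (hv : v ≠ 0) :
    finrank k V ≤ s.card := by
  have hs_top := (IsIrreducible.eq_bot_or_eq_top_of_mem_invtSubmodule σ hs).resolve_left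
    fun hbot => hv ((Submodule.eq_bot_iff _).mp hbot v (Submodule.subset_span hvs))
  rw [← finrank_top, ← hs_top]
  exact finrank_span_finset_le_card s

theorem IsIrreducible.finrank_le_two_of_relations [IsAlgClosed k] [FiniteDimensional k V]
    [σ.IsIrreducible] {g h ε : G} (hgen : Subgroup.closure {g, h, ε} = ⊤)
    (hhg : h * g = ε * g * h) (hgε : g * ε = ε⁻¹ * g) (hhε : h * ε = ε * h) :
    finrank k V ≤ 2 := by
  have : Nontrivial V := IsSimpleModule.nontrivial (MonoidAlgebra k G) σ.asModule
  obtain ⟨μ, hμ⟩ := IsIrreducible.exists_eq_smul_one_of_commute σ (T := σ (g * g)) fun x => by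
    simp only [Commute, SemiconjBy, ← map_mul,
      Subgroup.mem_center_iff.mp (mul_self_mem_center_of_relations hgen hhg hgε) x]
  obtain ⟨v, hv, β, c, hβ, hc⟩ := End.exists_common_eigenvector
    (show Commute (σ h) (σ ε) by simp only [Commute, SemiconjBy, ← map_mul, hhε])
  have hεg : ε * g = g * ε⁻¹ := eq_mul_inv_of_mul_eq (mul_mul_eq_of_mul_eq_inv_mul hgε)
  have hεgv : σ ε (σ g v) = c⁻¹ • σ g v := by
    rw [← End.mul_apply, ← map_mul, hεg, map_mul, End.mul_apply, σ.inv_apply_eq_inv_smul hc,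
      map_smul]
  have hhgv : σ h (σ g v) = (β * c⁻¹) • σ g v := by
    rw [← End.mul_apply, ← map_mul, hhg, map_mul, End.mul_apply, hβ, map_smul, map_mul,
      End.mul_apply, hεgv, smul_smul]
  have hggv : σ g (σ g v) = μ • v := by
    rw [← End.mul_apply, ← map_mul, hμ]
    rfl
  classical
  set p := Submodule.span k (({v, σ g v} : Finset V) : Set V)
  have hvp : v ∈ p := Submodule.subset_span (by simp)
  have hgvp : σ g v ∈ p := Submodule.subset_span (by simp)
  have invt_of_maps (T : End k V) (hTv : T v ∈ p) (hTgv : T (σ g v) ∈ p) :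
      p ∈ End.invtSubmodule T :=
    Submodule.span_le.mpr (by rw [Finset.coe_pair]; exact Set.pair_subset hTv hTgv)
  have hp : p ∈ σ.invtSubmodule := by
    refine σ.mem_invtSubmodule_of_closure_eq_top hgen ?_
    simp only [Set.mem_insert_iff, Set.mem_singleton_iff, forall_eq_or_imp, forall_eq]
    refine ⟨invt_of_maps _ hgvp ?_, invt_of_maps _ ?_ ?_, invt_of_maps _ ?_ ?_⟩
    · exact hggv ▸ p.smul_mem μ hvp
    · exact hβ ▸ p.smul_mem β hvp
    · exact hhgv ▸ p.smul_mem _ hgvp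
    · exact hc ▸ p.smul_mem c hvp
    · exact hεgv ▸ p.smul_mem _ hgvp
  exact (IsIrreducible.finrank_le_card_of_span_mem_invtSubmodule σ _ hp
    (Finset.mem_insert_self v _) hv).trans Finset.card_le_two

end Representation

theorem stmt9_general (n : ℕ) (K : Type) [Field K] (G : Type) [Group G]
    (f : Gamma n →* G) (hf : Function.Surjective f)
    (V : Type) [AddCommGroup V] [Module K V] [FiniteDimensional K V]
    (ρ : Representation K G V) (hρ : IsAbsolutelySimpleRep K G ρ) :
    Module.finrank K V ≤ 2 := by
  let L := AlgebraicClosure K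
  have : (repBaseChange L ρ).IsIrreducible :=
    (Representation.irreducible_iff_isSimpleModule_asModule _).mpr (hρ L)
  have hgen : Subgroup.closure {f (Gamma.g n), f (Gamma.h n), f (Gamma.ε n)} = ⊤ := by
    rw [← Set.image_pair, ← Set.image_insert_eq, ← MonoidHom.map_closure, Gamma.closure_g_h_ε,
      ← MonoidHom.range_eq_map, MonoidHom.range_eq_top.mpr hf]
  rw [← Module.finrank_baseChange (R := L)]
  refine Representation.IsIrreducible.finrank_le_two_of_relations (repBaseChange L ρ) hgen
    ?_ ?_ ?_ <;> simp only [← map_mul, ← map_inv, Gamma.h_mul_g, Gamma.g_mul_ε, Gamma.h_mul_ε]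

theorem stmt9 (n : ℕ) (hn : 2 ≤ n) (K : Type) [Field K] (G : Type) [Group G]
    (f : Gamma n →* G) (hf : Function.Surjective f)
    (V : Type) [AddCommGroup V] [Module K V] [FiniteDimensional K V]
    (ρ : Representation K G V) (hρ : IsAbsolutelySimpleRep K G ρ) :
    Module.finrank K V ≤ 2 :=
  stmt9_general n K G f hf V ρ hρ
end

section
/- Let X be a finite indecomposable quandle whose finite enveloping group Ḡ_X is finite, and let M = max{|𝒪| : 𝒪 is a conjugacy class of Ḡ_X}. Then every conjugacy class of the enveloping group G_X has at most M elements. -/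
open Quandles

/-- The inner group of a rack: the subgroup of permutations generated by the
translations `φᵢ = (i ◃ ·)`. -/
def quandleInn (X : Type) [Rack X] : Subgroup (Equiv.Perm X) :=
  Subgroup.closure (Set.range (fun i : X => Rack.act' i))

/-- A quandle is indecomposable if its inner group acts transitively. -/
def QuandleIndecomposable (X : Type) [Rack X] : Prop :=
  ∀ x y : X, ∃ f ∈ quandleInn X, f x = y

/-- The kernel of the projection from the enveloping group of a quandle to its finite
enveloping group: the normal closure of the set of elements `x_i ^ |φᵢ|`. -/
def envelKer (X : Type) [Quandle X] : Subgroup (Rack.EnvelGroup X) :=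
  Subgroup.normalClosure
    {w | ∃ i : X, w = (Rack.toEnvelGroup X i : Rack.EnvelGroup X) ^ orderOf (Rack.act' i)}

instance (X : Type) [Quandle X] : (envelKer X).Normal :=
  Subgroup.normalClosure_normal

/-!
Conjugation by `x_i ^ N_i` acts on the generators as `φᵢ ^ N_i = 1`, so `x_i ^ N_i` is central.
Since moreover `x_k x_i^{N_i} x_k⁻¹ = x_{k▷i}^{N_{k▷i}}`, indecomposability makes all the elements
`x_j ^ N_j` equal, and the kernel `K` of `G_X → Ḡ_X` lies in the cyclic group `⟨x_i⟩`. The degree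
map `G_X → ℤ`, `x_j ↦ 1`, is injective on `⟨x_i⟩` and constant on conjugacy classes, so
`G_X → Ḡ_X` is injective on every conjugacy class of `G_X`.
-/

theorem Subgroup.normal_of_le_center {G : Type*} [Group G] {H : Subgroup G}
    (h : H ≤ Subgroup.center G) : H.Normal :=
  ⟨fun n hn g => by rwa [Subgroup.mem_center_iff.mp (h hn) g, mul_inv_cancel_right]⟩

theorem eq_one_of_mem_zpowers_of_map_eq_one {G : Type*} [Group G] (D : G →* Multiplicative ℤ)
    {x k : G} (hx : D x = Multiplicative.ofAdd 1) (hk : k ∈ Subgroup.zpowers x) (hDk : D k = 1) :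
    k = 1 := by
  obtain ⟨m, rfl⟩ := hk
  rw [map_zpow, hx, ← ofAdd_zsmul, smul_eq_mul, mul_one, ofAdd_eq_one] at hDk
  exact hDk ▸ zpow_zero x

theorem QuotientGroup.injOn_mk'_conjugatesOf {G A : Type*} [Group G] [CommGroup A]
    {N : Subgroup G} [N.Normal] (D : G →* A) (hN : ∀ k ∈ N, D k = 1 → k = 1) (u : G) :
    Set.InjOn (QuotientGroup.mk' N) (conjugatesOf u) := by
  intro v hv w hw hvw
  have hDv : D v = D u := (isConj_iff_eq.mp (D.map_isConj hv)).symm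
  have hDw : D w = D u := (isConj_iff_eq.mp (D.map_isConj hw)).symm
  refine inv_mul_eq_one.mp (hN _ (QuotientGroup.eq.mp hvw) ?_)
  rw [map_mul, map_inv, hDv, hDw, inv_mul_cancel]

section InjOnConjugatesOf

variable {G H : Type*} [Group G] [Group H] (f : G →* H) {u : G}

theorem Set.InjOn.finite_conjugatesOf (hf : Set.InjOn f (conjugatesOf u))
    (ht : (conjugatesOf (f u)).Finite) : (conjugatesOf u).Finite :=
  Set.Finite.of_injOn (f := f) (fun _ hv => f.map_isConj hv) hf ht

theorem Set.InjOn.ncard_conjugatesOf_le (hf : Set.InjOn f (conjugatesOf u))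
    (ht : (conjugatesOf (f u)).Finite) : (conjugatesOf u).ncard ≤ (conjugatesOf (f u)).ncard :=
  Set.ncard_le_ncard_of_injOn f (fun _ hv => f.map_isConj hv) hf ht

end InjOnConjugatesOf

namespace Rack

variable {X : Type} [Quandle X]

-- `𝐱 i` is the generator `x_i` of `G_X`, read in `EnvelGroup X` rather than in `Quandle.Conj`.
local notation "𝐱" i:max => (toEnvelGroup _ i : EnvelGroup _)

theorem EnvelGroup.hom_ext {G : Type*} [Group G] {f g : EnvelGroup X →* G}
    (h : ∀ i, f (𝐱 i) = g (𝐱 i)) : f = g := by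
  rw [toEnvelGroup.univ_uniq X G _ f rfl, toEnvelGroup.univ_uniq X G _ g rfl]
  congr 1
  ext i
  exact h i

theorem toEnvelGroup_act (i j : X) : 𝐱 (i ◃ j) = 𝐱 i * 𝐱 j * (𝐱 i)⁻¹ := by
  rw [(toEnvelGroup X).map_act, Quandle.conj_act_eq_conj]

theorem toEnvelGroup_pow_conj (n : ℕ) (i j : X) :
    𝐱 i ^ n * 𝐱 j * (𝐱 i ^ n)⁻¹ = 𝐱 ((act' i ^ n) j) := by
  induction n with
  | zero => simp
  | succ n ih =>
    rw [pow_succ' (𝐱 i), pow_succ' (act' i), Equiv.Perm.mul_apply, act'_apply,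
      toEnvelGroup_act, ← ih]
    group

theorem toEnvelGroup_pow_orderOf_mem_center (i : X) :
    𝐱 i ^ orderOf (act' i) ∈ Subgroup.center (EnvelGroup X) := by
  have hconj : (MulAut.conj (𝐱 i ^ orderOf (act' i)) : EnvelGroup X →* EnvelGroup X) =
      MonoidHom.id _ :=
    EnvelGroup.hom_ext fun j => by
      simp only [MonoidHom.coe_coe, MulAut.conj_apply, toEnvelGroup_pow_conj,
        pow_orderOf_eq_one, Equiv.Perm.one_apply, MonoidHom.id_apply]
  refine Subgroup.mem_center_iff.mpr fun g => ?_
  have := DFunLike.congr_fun hconj g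
  simp only [MonoidHom.coe_coe, MulAut.conj_apply, MonoidHom.id_apply] at this
  exact (mul_inv_eq_iff_eq_mul.mp this).symm

theorem orderOf_act'_act (k i : X) : orderOf (act' (k ◃ i)) = orderOf (act' i) := by
  rw [ad_conj, ← MulAut.conj_apply, MulEquiv.orderOf_eq]

theorem toEnvelGroup_act_pow_orderOf (k i : X) :
    𝐱 (k ◃ i) ^ orderOf (act' (k ◃ i)) = 𝐱 i ^ orderOf (act' i) := by
  rw [orderOf_act'_act, toEnvelGroup_act, conj_pow,
    Subgroup.mem_center_iff.mp (toEnvelGroup_pow_orderOf_mem_center i), mul_inv_cancel_right]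

theorem toEnvelGroup_pow_orderOf_of_mem_quandleInn {f : Equiv.Perm X} (hf : f ∈ quandleInn X)
    (i : X) : 𝐱 (f i) ^ orderOf (act' (f i)) = 𝐱 i ^ orderOf (act' i) := by
  induction hf using Subgroup.closure_induction generalizing i with
  | mem _ hg =>
    obtain ⟨k, rfl⟩ := hg
    exact toEnvelGroup_act_pow_orderOf k i
  | one => rfl
  | mul f g _ _ ihf ihg => rw [Equiv.Perm.mul_apply, ihf, ihg]
  | inv f _ ih => rw [← ih (f⁻¹ i), ← Equiv.Perm.mul_apply, mul_inv_cancel, Equiv.Perm.one_apply]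

theorem envelKer_le_zpowers (hind : QuandleIndecomposable X) (i : X) :
    envelKer X ≤ Subgroup.zpowers (𝐱 i) := by
  set z := 𝐱 i ^ orderOf (act' i)
  have : (Subgroup.zpowers z).Normal :=
    Subgroup.normal_of_le_center (Subgroup.zpowers_le.mpr (toEnvelGroup_pow_orderOf_mem_center i))
  have hgen : ∀ j : X, 𝐱 j ^ orderOf (act' j) = z := fun j => by
    obtain ⟨f, hf, rfl⟩ := hind i j
    exact toEnvelGroup_pow_orderOf_of_mem_quandleInn hf i
  calc envelKer X ≤ Subgroup.zpowers z := Subgroup.normalClosure_le_normal <| by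
        rintro _ ⟨j, rfl⟩
        exact hgen j ▸ Subgroup.mem_zpowers z
    _ ≤ Subgroup.zpowers (𝐱 i) :=
        Subgroup.zpowers_le.mpr (Subgroup.pow_mem _ (Subgroup.mem_zpowers _) _)

def envelDegree : EnvelGroup X →* Multiplicative ℤ :=
  toEnvelGroup.map
    { toFun := fun _ => Multiplicative.ofAdd 1
      map_act' := by intros; rw [Quandle.conj_act_eq_conj, mul_inv_cancel_comm] }

theorem envelDegree_toEnvelGroup (i : X) : envelDegree (𝐱 i) = Multiplicative.ofAdd 1 := rfl

theorem eq_one_of_mem_envelKer (hind : QuandleIndecomposable X) {k : EnvelGroup X}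
    (hk : k ∈ envelKer X) (hDk : envelDegree k = 1) : k = 1 := by
  rcases isEmpty_or_nonempty X with hX | ⟨⟨i⟩⟩
  · have : envelKer X = ⊥ :=
      Subgroup.normalClosure_eq_bot_iff.mpr fun _ ⟨j, _⟩ => isEmptyElim j
    simpa [this] using hk
  · exact eq_one_of_mem_zpowers_of_map_eq_one envelDegree (envelDegree_toEnvelGroup i)
      (envelKer_le_zpowers hind i hk) hDk

end Rack

theorem stmt13_general (X : Type) [Quandle X] (hind : QuandleIndecomposable X)
    (hfin : Finite (Rack.EnvelGroup X ⧸ envelKer X)) (M : ℕ)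
    (hM : IsGreatest
      {k : ℕ | ∃ w : Rack.EnvelGroup X ⧸ envelKer X,
        k = Set.ncard {v : Rack.EnvelGroup X ⧸ envelKer X | IsConj w v}} M) :
    ∀ u : Rack.EnvelGroup X,
      {v : Rack.EnvelGroup X | IsConj u v}.Finite ∧
      Set.ncard {v : Rack.EnvelGroup X | IsConj u v} ≤ M := by
  intro u
  have hinj := QuotientGroup.injOn_mk'_conjugatesOf Rack.envelDegree
    (fun _ hk => Rack.eq_one_of_mem_envelKer hind hk) u
  have hfin_class : (conjugatesOf (QuotientGroup.mk' (envelKer X) u)).Finite := Set.toFinite _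
  exact ⟨hinj.finite_conjugatesOf _ hfin_class,
    (hinj.ncard_conjugatesOf_le _ hfin_class).trans (hM.2 ⟨_, rfl⟩)⟩

theorem stmt13 (X : Type) [Quandle X] [Finite X] (hind : QuandleIndecomposable X)
    (hfin : Finite (Rack.EnvelGroup X ⧸ envelKer X)) (M : ℕ)
    (hM : IsGreatest
      {k : ℕ | ∃ w : Rack.EnvelGroup X ⧸ envelKer X,
        k = Set.ncard {v : Rack.EnvelGroup X ⧸ envelKer X | IsConj w v}} M) :
    ∀ u : Rack.EnvelGroup X,
      {v : Rack.EnvelGroup X | IsConj u v}.Finite ∧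
      Set.ncard {v : Rack.EnvelGroup X | IsConj u v} ≤ M :=
  stmt13_general X hind hfin M hM
end
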